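/- Consider the Watts–Strogatz mean-field system with inertia δ = 0. Suppose the Case-4 condition p·(α+β)·min{r, 1−r} > α holds, and let c be a real number with 1/2 < c < 1. Then the function θ(t) = (c·e^{−t}, c·e^{−t}) is a solution of the system on the interval [0, ln(2c)) with θ^B(0) = θ^R(0) = c, and θ(t) → (1/2, 1/2) as t → ln(2c) from the left (non-partisan polarization, with each group approaching an equal split between the two choices). -/

import Mathlib

open Set Filter

/-- `g^B(θ) = α(1−pr)(2θ^B−1) − βpr(2θ^R−1)`. -/
noncomputable def gB (α β p r θB θR : ℝ) : ℝ :=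
  α * (1 - p * r) * (2 * θB - 1) - β * p * r * (2 * θR - 1)

/-- `g^R(θ) = α(1−p(1−r))(2θ^R−1) − β(1−r)p(2θ^B−1)`. -/
noncomputable def gR (α β p r θB θR : ℝ) : ℝ :=
  α * (1 - p * (1 - r)) * (2 * θR - 1) - β * (1 - r) * p * (2 * θB - 1)

/-- Right-hand side of the blue equation:
`(1−θ^B)·𝟙[g^B(θ) > 0] − θ^B·𝟙[g^B(θ) < 0]`. -/
noncomputable def rhsB (α β p r θB θR : ℝ) : ℝ :=
  (1 - θB) * (if 0 < gB α β p r θB θR then 1 else 0)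
    - θB * (if gB α β p r θB θR < 0 then 1 else 0)

/-- Right-hand side of the red equation:
`(1−θ^R)·𝟙[g^R(θ) > 0] − θ^R·𝟙[g^R(θ) < 0]`. -/
noncomputable def rhsR (α β p r θB θR : ℝ) : ℝ :=
  (1 - θR) * (if 0 < gR α β p r θB θR then 1 else 0)
    - θR * (if gR α β p r θB θR < 0 then 1 else 0)

/-- `θ = (θ^B, θ^R)` is a solution of the Watts–Strogatz mean-field system
(with inertia `δ = 0`) on the set `J`: it is differentiable on `J` and satisfies
the two differential equations at every `t ∈ J`. -/
def IsWSSolutionOn (α β p r : ℝ) (θB θR : ℝ → ℝ) (J : Set ℝ) : Prop :=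
  ∀ t ∈ J,
    HasDerivWithinAt θB (rhsB α β p r (θB t) (θR t)) J t ∧
    HasDerivWithinAt θR (rhsR α β p r (θB t) (θR t)) J t

/-!
Along the diagonal `θ^B = θ^R = θ` both switching functions factor as `(2θ − 1)` times
`α − p(α+β)r`, resp. `α − p(α+β)(1−r)`, and the Case-4 condition makes both second factors
negative. Hence while `θ > 1/2` both groups are in the "decrease" regime, the system reduces to
`θ' = −θ`, and `c e^{−t}` solves it until it reaches `1/2` at time `ln(2c)`.
-/

section Diagonal

variable (α β p r : ℝ)

theorem gB_diag (θ : ℝ) : gB α β p r θ θ = (2 * θ - 1) * (α - p * (α + β) * r) := by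
  unfold gB; ring

theorem gR_diag (θ : ℝ) : gR α β p r θ θ = (2 * θ - 1) * (α - p * (α + β) * (1 - r)) := by
  unfold gR; ring

theorem gB_diag_neg {θ : ℝ} (hθ : 1 / 2 < θ) (h : α < p * (α + β) * r) :
    gB α β p r θ θ < 0 := by
  rw [gB_diag]
  exact mul_neg_of_pos_of_neg (by linarith) (by linarith)

theorem gR_diag_neg {θ : ℝ} (hθ : 1 / 2 < θ) (h : α < p * (α + β) * (1 - r)) :
    gR α β p r θ θ < 0 := by
  rw [gR_diag]
  exact mul_neg_of_pos_of_neg (by linarith) (by linarith)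

theorem rhsB_of_gB_neg {θB θR : ℝ} (h : gB α β p r θB θR < 0) :
    rhsB α β p r θB θR = -θB := by
  simp [rhsB, h, h.not_gt]

theorem rhsR_of_gR_neg {θB θR : ℝ} (h : gR α β p r θB θR < 0) :
    rhsR α β p r θB θR = -θR := by
  simp [rhsR, h, h.not_gt]

end Diagonal

theorem hasDerivAt_const_mul_exp_neg (c t : ℝ) :
    HasDerivAt (fun s => c * Real.exp (-s)) (-(c * Real.exp (-t))) t := by
  simpa using ((Real.hasDerivAt_exp (-t)).comp t (hasDerivAt_neg t)).const_mul c

theorem const_mul_exp_neg_log_two_mul {c : ℝ} (hc : 0 < c) :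
    c * Real.exp (-Real.log (2 * c)) = 1 / 2 := by
  rw [Real.exp_neg, Real.exp_log (by positivity)]
  field_simp

theorem half_lt_const_mul_exp_neg {c t : ℝ} (hc : 0 < c) (ht : t < Real.log (2 * c)) :
    1 / 2 < c * Real.exp (-t) := by
  rw [← const_mul_exp_neg_log_two_mul hc]
  gcongr

theorem ws_case4_trajectory_high_general
    (α β p r : ℝ)
    (hα : α ∈ Set.Icc (0:ℝ) 1) (hβ : β ∈ Set.Icc (0:ℝ) 1)
    (hp : p ∈ Set.Icc (0:ℝ) 1)
    (hcase : α < p * (α + β) * min r (1 - r))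
    (c : ℝ) (hc1 : 1 / 2 < c) :
    IsWSSolutionOn α β p r (fun t => c * Real.exp (-t)) (fun t => c * Real.exp (-t))
      (Set.Ico 0 (Real.log (2 * c))) ∧
    c * Real.exp (-(0:ℝ)) = c ∧
    Filter.Tendsto (fun t => (c * Real.exp (-t), c * Real.exp (-t)))
      (nhdsWithin (Real.log (2 * c)) (Set.Iio (Real.log (2 * c))))
      (nhds ((1 / 2 : ℝ), (1 / 2 : ℝ))) := by
  have hc : 0 < c := by linarith
  have hk : 0 ≤ p * (α + β) := mul_nonneg hp.1 (add_nonneg hα.1 hβ.1)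
  obtain ⟨hB, hR⟩ := lt_min_iff.1 (mul_min_of_nonneg r (1 - r) hk ▸ hcase)
  refine ⟨fun t ht => ?_, by simp, ?_⟩
  · have hθ := half_lt_const_mul_exp_neg hc ht.2
    have hderiv := (hasDerivAt_const_mul_exp_neg c t).hasDerivWithinAt
      (s := Set.Ico 0 (Real.log (2 * c)))
    exact ⟨rhsB_of_gB_neg α β p r (gB_diag_neg α β p r hθ hB) ▸ hderiv,
      rhsR_of_gR_neg α β p r (gR_diag_neg α β p r hθ hR) ▸ hderiv⟩
  · have hlim : Tendsto (fun t => c * Real.exp (-t))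
        (nhdsWithin (Real.log (2 * c)) (Set.Iio (Real.log (2 * c)))) (nhds (1 / 2)) := by
      rw [← const_mul_exp_neg_log_two_mul hc]
      exact ((continuous_const.mul (Real.continuous_exp.comp continuous_neg)).tendsto _).mono_left
        nhdsWithin_le_nhds
    exact hlim.prodMk_nhds hlim

/-- Under the Case-4 condition `p(α+β)min{r,1−r} > α` and `1/2 < c < 1`,
`θ(t) = (c·e^{−t}, c·e^{−t})` solves the system on `[0, ln(2c))` with `θ^B(0) = θ^R(0) = c`,
and `θ(t) → (1/2, 1/2)` as `t → ln(2c)⁻` (non-partisan polarization). -/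
theorem ws_case4_trajectory_high
    (α β p r : ℝ)
    (hα : α ∈ Set.Icc (0:ℝ) 1) (hβ : β ∈ Set.Icc (0:ℝ) 1)
    (hp : p ∈ Set.Icc (0:ℝ) 1) (hr : r ∈ Set.Ioo (0:ℝ) 1)
    (hcase : α < p * (α + β) * min r (1 - r))
    (c : ℝ) (hc1 : 1 / 2 < c) (hc2 : c < 1) :
    IsWSSolutionOn α β p r (fun t => c * Real.exp (-t)) (fun t => c * Real.exp (-t))
      (Set.Ico 0 (Real.log (2 * c))) ∧
    c * Real.exp (-(0:ℝ)) = c ∧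
    Filter.Tendsto (fun t => (c * Real.exp (-t), c * Real.exp (-t)))
      (nhdsWithin (Real.log (2 * c)) (Set.Iio (Real.log (2 * c))))
      (nhds ((1 / 2 : ℝ), (1 / 2 : ℝ))) :=
  ws_case4_trajectory_high_general α β p r hα hβ hp hcase c hc1
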